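/- arXiv:2303.18096 — 2 statements merged into one kernel-verified Lean document; each statement's English description precedes it below -/
import Mathlib

section
/- Let m ≥ 2, s ≥ 1, let Y be an m×s matrix with nonnegative integer entries whose rows are y_1,…,y_m ∈ ℕ^s, and let κ_1,…,κ_m ∈ ℝ_{>0}. Let A(κ) be the transposed cycle Laplacian, set Σ = Yᵀ · A(κ), and let d = dim ker(Σ). If the PDSC condition holds for Σ, then there exist a partition I_1,…,I_d of {1,…,m} into nonempty sets and a basis b^1,…,b^d of ker(Σ) with supp(b^i) = I_i such that, in addition, all nonzero entries of each b^i are positive; in particular, for each i, all nonzero entries of b^i have the same sign. -/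
/-- The transposed weighted Laplacian of the directed `m`-cycle with rates `κ`:
its `j`-th column is `κ j • (e (j+1) - e j)`, indices mod `m`. -/
def cycleLaplacianT (m : ℕ) [NeZero m] (κ : Fin m → ℝ) : Matrix (Fin m) (Fin m) ℝ :=
  Matrix.of fun t j => κ j * ((if t = j + 1 then 1 else 0) - (if t = j then 1 else 0))

/-- The PDSC condition for an `s × m` real matrix `S`: with `d = dim ker S`, there is a
partition `I 1, …, I d` of `{1,…,m}` into nonempty sets and a basis `b 1, …, b d` of
`ker S` with `supp (b i) = I i` for each `i`. -/
def PDSCCondition {s m : ℕ} (S : Matrix (Fin s) (Fin m) ℝ) : Prop :=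
  ∃ (I : Fin (Module.finrank ℝ (LinearMap.ker S.mulVecLin)) → Set (Fin m))
    (b : Fin (Module.finrank ℝ (LinearMap.ker S.mulVecLin)) → Fin m → ℝ),
    (∀ i, (I i).Nonempty) ∧
    (Pairwise fun i i' => Disjoint (I i) (I i')) ∧
    (⋃ i, I i) = Set.univ ∧
    (∀ i, {j | b i j ≠ 0} = I i) ∧
    LinearIndependent ℝ b ∧
    Submodule.span ℝ (Set.range b) = LinearMap.ker S.mulVecLin

/-!
The vector `κ⁻¹` is a positive element of `ker (Yᵀ A(κ))`, since it already lies in `ker A(κ)`.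
Expanding it in a basis with pairwise disjoint supports, the coefficient `c i` times `b i j`
equals the positive entry `(κ j)⁻¹` at every `j` in the support of `b i`; so the rescaled basis
`c i • b i` has the same supports and span, and positive nonzero entries.
-/

open Function Matrix Submodule

theorem Submodule.span_range_units_smul {ι R M : Type*} [Semiring R] [AddCommMonoid M]
    [Module R M] (v : ι → M) (w : ι → Rˣ) :
    span R (Set.range (w • v)) = span R (Set.range v) := by
  have hle : ∀ (w : ι → Rˣ) (v : ι → M), span R (Set.range (w • v)) ≤ span R (Set.range v) :=
    fun w v => span_le.2 <| Set.range_subset_iff.2 fun i =>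
      smul_mem _ _ (subset_span (Set.mem_range_self i))
  refine le_antisymm (hle w v) ?_
  simpa only [inv_smul_smul] using hle w⁻¹ (w • v)

section DisjointSupport

variable {ι α R : Type*} [Fintype ι] [Semiring R] {b : ι → α → R}

theorem sum_smul_apply_of_pairwise_disjoint_support
    (hb : Pairwise (Disjoint on fun i => support (b i))) (c : ι → R) {i : ι} {j : α}
    (hj : b i j ≠ 0) : (∑ i', c i' • b i') j = c i * b i j := by
  rw [Finset.sum_apply, Finset.sum_eq_single i]
  · rfl
  · intro i' _ hi'
    have hbi' : b i' j = 0 := notMem_support.1 fun h => (hb hi').ne_of_mem h hj rfl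
    simp [hbi']
  · simp

theorem exists_mul_pos_of_pos_mem_span [PartialOrder R]
    (hb : Pairwise (Disjoint on fun i => support (b i))) {w : α → R}
    (hw : w ∈ span R (Set.range b)) (hpos : ∀ j, 0 < w j) :
    ∃ c : ι → R, ∀ i j, b i j ≠ 0 → 0 < c i * b i j := by
  obtain ⟨c, rfl⟩ := (mem_span_range_iff_exists_fun R).1 hw
  exact ⟨c, fun i j hj => sum_smul_apply_of_pairwise_disjoint_support hb c hj ▸ hpos j⟩

end DisjointSupport

theorem PDSCCondition.exists_pos_basis {s m : ℕ} {S : Matrix (Fin s) (Fin m) ℝ}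
    (h : PDSCCondition S) {w : Fin m → ℝ} (hw : S *ᵥ w = 0) (hpos : ∀ j, 0 < w j) :
    ∃ (I : Fin (Module.finrank ℝ (LinearMap.ker S.mulVecLin)) → Set (Fin m))
      (b : Fin (Module.finrank ℝ (LinearMap.ker S.mulVecLin)) → Fin m → ℝ),
      (∀ i, (I i).Nonempty) ∧
      (Pairwise fun i i' => Disjoint (I i) (I i')) ∧
      (⋃ i, I i) = Set.univ ∧
      (∀ i, {j | b i j ≠ 0} = I i) ∧
      LinearIndependent ℝ b ∧
      span ℝ (Set.range b) = LinearMap.ker S.mulVecLin ∧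
      (∀ i j, b i j ≠ 0 → 0 < b i j) := by
  obtain ⟨I, b, hne, hdisj, hcover, hsupp, hli, hspan⟩ := h
  have hb : Pairwise (Disjoint on fun i => support (b i)) := fun i i' hii' => by
    simpa only [onFun, support, hsupp] using hdisj hii'
  have hw' : w ∈ span ℝ (Set.range b) := by rwa [hspan, LinearMap.mem_ker, mulVecLin_apply]
  obtain ⟨c, hc⟩ := exists_mul_pos_of_pos_mem_span hb hw' hpos
  have hc0 : ∀ i, c i ≠ 0 := fun i =>
    let ⟨j, hj⟩ := hne i
    left_ne_zero_of_mul (hc i j (by rwa [← hsupp i] at hj)).ne'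
  set u := fun i => Units.mk0 (c i) (hc0 i)
  have hub : ∀ i j, (u • b) i j = c i * b i j := fun _ _ => rfl
  refine ⟨I, u • b, hne, hdisj, hcover, fun i => ?_, hli.units_smul u,
    by rw [span_range_units_smul, hspan], fun i j hj => ?_⟩
  · simp only [← hsupp i, hub, ne_eq, mul_eq_zero, hc0 i, false_or]
  · rw [hub] at hj ⊢
    exact hc i j (right_ne_zero_of_mul hj)

theorem cycleLaplacianT_mulVec_apply (m : ℕ) [NeZero m] (κ x : Fin m → ℝ) (t : Fin m) :
    (cycleLaplacianT m κ *ᵥ x) t = κ (t - 1) * x (t - 1) - κ t * x t := by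
  simp [Matrix.mulVec, dotProduct, cycleLaplacianT, mul_sub, sub_mul, Finset.sum_sub_distrib,
    ← sub_eq_iff_eq_add, eq_comm]

theorem cycleLaplacianT_mulVec_inv (m : ℕ) [NeZero m] {κ : Fin m → ℝ} (hκ : ∀ j, κ j ≠ 0) :
    cycleLaplacianT m κ *ᵥ κ⁻¹ = 0 :=
  funext fun t => by simp [cycleLaplacianT_mulVec_apply, hκ]

theorem pdsc_cycle_positive_basis_general (m s : ℕ) [NeZero m]
    (Y : Matrix (Fin m) (Fin s) ℕ) (κ : Fin m → ℝ) (hκ : ∀ i, 0 < κ i)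
    (hPDSC : PDSCCondition ((Y.map (Nat.cast : ℕ → ℝ)).transpose * cycleLaplacianT m κ)) :
    ∃ (I : Fin (Module.finrank ℝ (LinearMap.ker
          ((Y.map (Nat.cast : ℕ → ℝ)).transpose * cycleLaplacianT m κ).mulVecLin)) → Set (Fin m))
      (b : Fin (Module.finrank ℝ (LinearMap.ker
          ((Y.map (Nat.cast : ℕ → ℝ)).transpose * cycleLaplacianT m κ).mulVecLin)) → Fin m → ℝ),
      (∀ i, (I i).Nonempty) ∧
      (Pairwise fun i i' => Disjoint (I i) (I i')) ∧
      (⋃ i, I i) = Set.univ ∧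
      (∀ i, {j | b i j ≠ 0} = I i) ∧
      LinearIndependent ℝ b ∧
      Submodule.span ℝ (Set.range b) = LinearMap.ker
          ((Y.map (Nat.cast : ℕ → ℝ)).transpose * cycleLaplacianT m κ).mulVecLin ∧
      (∀ i j, b i j ≠ 0 → 0 < b i j) := by
  have hker : cycleLaplacianT m κ *ᵥ κ⁻¹ = 0 := cycleLaplacianT_mulVec_inv m fun j => (hκ j).ne'
  refine hPDSC.exists_pos_basis (w := κ⁻¹) ?_ fun j => inv_pos.2 (hκ j)
  rw [← mulVec_mulVec, hker, mulVec_zero]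

/-- **Corollary 4.4.** If a directed cycle network is a PDSC network, then the
partition and basis witnessing the PDSC condition can be chosen so that all nonzero entries of
each basis vector are positive (in particular, of the same sign). -/
theorem pdsc_cycle_positive_basis (m s : ℕ) (hm : 2 ≤ m) [NeZero m] (hs : 1 ≤ s)
    (Y : Matrix (Fin m) (Fin s) ℕ) (κ : Fin m → ℝ) (hκ : ∀ i, 0 < κ i)
    (hPDSC : PDSCCondition ((Y.map (Nat.cast : ℕ → ℝ)).transpose * cycleLaplacianT m κ)) :
    ∃ (I : Fin (Module.finrank ℝ (LinearMap.ker
          ((Y.map (Nat.cast : ℕ → ℝ)).transpose * cycleLaplacianT m κ).mulVecLin)) → Set (Fin m))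
      (b : Fin (Module.finrank ℝ (LinearMap.ker
          ((Y.map (Nat.cast : ℕ → ℝ)).transpose * cycleLaplacianT m κ).mulVecLin)) → Fin m → ℝ),
      (∀ i, (I i).Nonempty) ∧
      (Pairwise fun i i' => Disjoint (I i) (I i')) ∧
      (⋃ i, I i) = Set.univ ∧
      (∀ i, {j | b i j ≠ 0} = I i) ∧
      LinearIndependent ℝ b ∧
      Submodule.span ℝ (Set.range b) = LinearMap.ker
          ((Y.map (Nat.cast : ℕ → ℝ)).transpose * cycleLaplacianT m κ).mulVecLin ∧
      (∀ i j, b i j ≠ 0 → 0 < b i j) :=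
  pdsc_cycle_positive_basis_general m s Y κ hκ hPDSC
end

section
/- Let m ≥ 3 be odd. Let M be the m×m real matrix whose first column is e_1 and whose remaining m−1 columns are the vectors e_{i−2} + e_{i−1} − e_i − e_{i+1} for i = 1, 2, …, m−1, where e_1,…,e_m is the standard basis of ℝ^m and all indices are taken modulo m with representatives in {1,…,m}. Then |det(M)| = 1. -/
/-!
Over `ℤ`, a square matrix has determinant `±1` exactly when its columns span `ℤ^m`. The columns
after the first are shifts of `g = e₀ + e₁ - e₂ - e₃`; as all `m` shifts of `g` sum to zero, the
missing one lies in the span as well. Now `g_j = b_j + b_{j+1}` with `b_j = e_j - e_{j+2}`, and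
`b_j = a_j + a_{j+1}` with `a_j = e_j - e_{j+1}`, where `a` and `b` also sum to zero. For odd `m`
such a factor can be peeled off: if `∑ f = 0` then
`f_j = -((f_{j+1} + f_{j+2}) + ⋯ + (f_{j+m-2} + f_{j+m-1}))`. Hence every `a_j` lies in the span,
and together with the first column `e₀` this gives every `e_k`.
-/

open Finset

-- The paper's `e (i-2) + e (i-1) - e i - e (i+1)`, with indices shifted down by one.
def socColumn (R : Type*) [Ring R] {m : ℕ} [NeZero m] (j : Fin m) : Fin m → R :=
  Pi.single (j - 3) 1 + Pi.single (j - 2) 1 - Pi.single (j - 1) 1 - Pi.single j 1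

def socMatrix (R : Type*) [Ring R] (m : ℕ) [NeZero m] : Matrix (Fin m) (Fin m) R :=
  Matrix.of fun t j => (if j = 0 then Pi.single 0 1 else socColumn R j) t

section

variable {m : ℕ} [NeZero m]

theorem socMatrix_col (R : Type*) [Ring R] (j : Fin m) :
    (socMatrix R m).col j = if j = 0 then Pi.single 0 1 else socColumn R j :=
  rfl

theorem AddSubgroup.mem_of_sum_eq_zero_of_forall_ne_mem {ι V : Type*} [Fintype ι]
    [DecidableEq ι] [AddCommGroup V] (S : AddSubgroup V) {g : ι → V} (hsum : ∑ i, g i = 0)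
    {c : ι} (h : ∀ i ≠ c, g i ∈ S) : g c ∈ S := by
  rw [← sum_erase_add univ g (mem_univ c)] at hsum
  rw [eq_neg_of_add_eq_zero_right hsum]
  exact neg_mem (sum_mem fun i hi => h i (ne_of_mem_erase hi))

theorem Fintype.sum_comp_add_right {G M : Type*} [AddGroup G] [Fintype G] [AddCommMonoid M]
    (f : G → M) (c : G) : ∑ j, f (j + c) = ∑ j, f j :=
  Equiv.sum_comp (Equiv.addRight c) f

section
open Fin.CommRing

variable {V : Type*} [AddCommGroup V]

theorem AddSubgroup.mem_of_sum_eq_zero_of_forall_add_succ_mem (hodd : Odd m) (S : AddSubgroup V)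
    {f : Fin m → V} (hsum : ∑ j, f j = 0) (hf : ∀ j, f j + f (j + 1) ∈ S) (j : Fin m) :
    f j ∈ S := by
  obtain ⟨n, rfl⟩ := hodd
  have partial_sum_mem : ∀ k, ∑ i ∈ range (2 * k + 1), f (j + i) - f j ∈ S := by
    intro k
    induction k with
    | zero => simp
    | succ k ih =>
      rw [show 2 * (k + 1) + 1 = 2 * k + 1 + 1 + 1 by ring, sum_range_succ, sum_range_succ,
        add_assoc, add_sub_right_comm]
      refine add_mem ih ?_
      convert hf (j + (2 * k + 1 : ℕ)) using 3
      push_cast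
      ring
  have full_sum : ∑ i ∈ range (2 * n + 1), f (j + i) = 0 := by
    rw [← Fin.sum_univ_eq_sum_range (fun i => f (j + i))]
    simp_rw [Fin.cast_val_eq_self, add_comm j]
    rw [Fintype.sum_comp_add_right, hsum]
  simpa [full_sum] using neg_mem (partial_sum_mem n)

theorem AddSubgroup.mem_of_zero_mem_of_forall_add_add_sub_sub_mem (hodd : Odd m)
    (S : AddSubgroup V) {e : Fin m → V} (h0 : e 0 ∈ S)
    (hg : ∀ j, e j + e (j + 1) - e (j + 2) - e (j + 3) ∈ S) (k : Fin m) : e k ∈ S := by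
  have sum_sub_shift (c : Fin m) : ∑ j, (e j - e (j + c)) = 0 := by
    rw [sum_sub_distrib, Fintype.sum_comp_add_right, sub_self]
  have hb : ∀ j, e j - e (j + 2) ∈ S :=
    S.mem_of_sum_eq_zero_of_forall_add_succ_mem hodd (sum_sub_shift 2) fun j => by
      convert hg j using 1
      rw [show j + 1 + 2 = j + 3 by ring]
      abel
  have ha : ∀ j, e j - e (j + 1) ∈ S :=
    S.mem_of_sum_eq_zero_of_forall_add_succ_mem hodd (sum_sub_shift 1) fun j => by
      convert hb j using 1
      rw [show j + 1 + 1 = j + 2 by ring]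
      abel
  have hn : ∀ n : ℕ, e n ∈ S := by
    intro n
    induction n with
    | zero => simpa using h0
    | succ n ih =>
      rw [Nat.cast_succ, ← sub_sub_cancel (e n) (e (n + 1))]
      exact sub_mem ih (ha n)
  simpa using hn k

theorem sum_socColumn (R : Type*) [Ring R] : ∑ j : Fin m, socColumn R j = 0 := by
  simp only [socColumn, sum_add_distrib, sum_sub_distrib]
  simp_rw [sub_eq_add_neg _ (3 : Fin m), sub_eq_add_neg _ (2 : Fin m), sub_eq_add_neg _ (1 : Fin m),
    Fintype.sum_comp_add_right (fun j => (Pi.single j 1 : Fin m → R))]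
  abel

theorem socColumn_add_three (R : Type*) [Ring R] (j : Fin m) :
    socColumn R (j + 3) =
      Pi.single j 1 + Pi.single (j + 1) 1 - Pi.single (j + 2) 1 - Pi.single (j + 3) 1 := by
  simp only [socColumn]
  congr 4 <;> ring

end

theorem isUnit_socMatrix (R : Type*) [CommRing R] (hodd : Odd m) : IsUnit (socMatrix R m) := by
  set S := LinearMap.range (socMatrix R m).mulVecLin
  have col_mem (j : Fin m) : (socMatrix R m).col j ∈ S :=
    ⟨Pi.single j 1, (socMatrix R m).mulVec_single_one j⟩
  have socColumn_mem (j : Fin m) : socColumn R j ∈ S := by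
    rcases eq_or_ne j 0 with rfl | hj
    · refine S.toAddSubgroup.mem_of_sum_eq_zero_of_forall_ne_mem (sum_socColumn R) fun i hi => ?_
      simpa [socMatrix_col, hi] using col_mem i
    · simpa [socMatrix_col, hj] using col_mem j
  have single_mem (k : Fin m) : Pi.single k 1 ∈ S := by
    refine S.toAddSubgroup.mem_of_zero_mem_of_forall_add_add_sub_sub_mem hodd
      (e := fun k => Pi.single k 1) ?_ (fun j => ?_) k
    · simpa [socMatrix_col] using col_mem 0
    · simpa [socColumn_add_three] using socColumn_mem (j + 3)
  rw [← Matrix.mulVec_surjective_iff_isUnit, ← Matrix.coe_mulVecLin, ← LinearMap.range_eq_top,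
    eq_top_iff, ← (Pi.basisFun R (Fin m)).span_eq, Submodule.span_le]
  rintro _ ⟨k, rfl⟩
  rw [Pi.basisFun_apply]
  exact single_mem k

end

theorem soc_odd_det_general (m : ℕ) (hodd : Odd m) [NeZero m]
    (M : Matrix (Fin m) (Fin m) ℝ)
    (hM0 : ∀ t : Fin m, M t 0 = if t = 0 then 1 else 0)
    (hM : ∀ (t j : Fin m), j ≠ 0 → M t j =
      (if t = j - 3 then 1 else 0) + (if t = j - 2 then 1 else 0)
      - (if t = j - 1 then 1 else 0) - (if t = j then 1 else 0)) :
    |M.det| = 1 := by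
  have hM_eq : M = (socMatrix ℤ m).map (Int.cast : ℤ → ℝ) := by
    ext t j
    rcases eq_or_ne j 0 with rfl | hj
    · simp [socMatrix, hM0, Pi.single_apply]
    · simp [socMatrix, socColumn, hM t j hj, hj, Pi.single_apply]
  have hdet : |(socMatrix ℤ m).det| = 1 := Int.isUnit_iff_abs_eq.mp
    ((Matrix.isUnit_iff_isUnit_det _).mp (isUnit_socMatrix ℤ hodd))
  rw [hM_eq, ← Int.cast_det, ← Int.cast_abs, hdet, Int.cast_one]

/-- **from Theorem 4.7, odd case.** For odd `m ≥ 3`, the `m × m` matrix whose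
first column is `e 1` and whose remaining columns are `e (i-2) + e (i-1) - e i - e (i+1)` for
`i = 1, …, m-1` (paper indices cyclic mod `m` in `{1,…,m}`; here `0`-indexed, so column
`j ≠ 0` is `e (j-3) + e (j-2) - e (j-1) - e j` with `Fin m` arithmetic) has `|det| = 1`. -/
theorem soc_odd_det (m : ℕ) (hm : 3 ≤ m) (hodd : Odd m) [NeZero m]
    (M : Matrix (Fin m) (Fin m) ℝ)
    (hM0 : ∀ t : Fin m, M t 0 = if t = 0 then 1 else 0)
    (hM : ∀ (t j : Fin m), j ≠ 0 → M t j =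
      (if t = j - 3 then 1 else 0) + (if t = j - 2 then 1 else 0)
      - (if t = j - 1 then 1 else 0) - (if t = j then 1 else 0)) :
    |M.det| = 1 :=
  soc_odd_det_general m hodd M hM0 hM
end
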